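/- Let R = k[x,y,z,w]/(Ax - By) where A, B ∈ k[x,y,z,w], and let J = (x,y) ⊂ R. Then there exists an R-module homomorphism φ: J → R with φ(x) = B and φ(y) = A, and it is the unique such homomorphism determined by these values. -/

import Mathlib

/-! A homomorphism on `J = (x, y)` with `x ↦ B`, `y ↦ A` exists as soon as every syzygy
`r x + s y = 0` of `R` satisfies `r B + s A = 0`, and it is unique because `x, y` generate `J`.
Lifting a syzygy to the polynomial ring gives `r x + s y = t (A x - B y)`, so `x ∣ (s + t B) y`.
As `x` is prime and does not divide `y`, `s + t B = c x`; then `r = t A - c y`, and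
`r B + s A = c (A x - B y)` vanishes in `R`. -/

open MvPolynomial

theorem LinearMap.existsUnique_comp_eq_of_surjective {R M N P : Type*} [Ring R]
    [AddCommGroup M] [Module R M] [AddCommGroup N] [Module R N] [AddCommGroup P] [Module R P]
    {g : M →ₗ[R] P} (hg : Function.Surjective g) {f : M →ₗ[R] N}
    (hker : LinearMap.ker g ≤ LinearMap.ker f) :
    ∃! φ : P →ₗ[R] N, φ ∘ₗ g = f := by
  have hφ : ((LinearMap.ker g).liftQ f hker ∘ₗ
      (g.quotKerEquivOfSurjective hg).symm.toLinearMap) ∘ₗ g = f := by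
    ext m
    simp [LinearMap.quotKerEquivOfSurjective_symm_apply]
  exact ⟨_, hφ, fun ψ hψ => (LinearMap.cancel_right hg).mp (hψ.trans hφ.symm)⟩

section SpanPair

variable {R M N : Type*} [Ring R] [AddCommGroup M] [Module R M] [AddCommGroup N] [Module R N]

def Submodule.spanPairPresentation (x y : M) : R × R →ₗ[R] Submodule.span R {x, y} :=
  LinearMap.codRestrict _ ((LinearMap.toSpanSingleton R M x).coprod
      (LinearMap.toSpanSingleton R M y))
    fun p => Submodule.mem_span_pair.mpr ⟨p.1, p.2, rfl⟩

@[simp]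
theorem Submodule.coe_spanPairPresentation_apply (x y : M) (p : R × R) :
    (Submodule.spanPairPresentation x y p : M) = p.1 • x + p.2 • y :=
  rfl

theorem Submodule.spanPairPresentation_surjective (x y : M) :
    Function.Surjective (Submodule.spanPairPresentation (R := R) x y) := by
  rintro ⟨z, hz⟩
  obtain ⟨r, s, rfl⟩ := Submodule.mem_span_pair.mp hz
  exact ⟨(r, s), rfl⟩

theorem existsUnique_linearMap_span_pair (x y : M) (fx fy : N)
    (hrel : ∀ r s : R, r • x + s • y = 0 → r • fx + s • fy = 0) :
    ∃! φ : Submodule.span R {x, y} →ₗ[R] N,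
      φ ⟨x, Submodule.subset_span (Set.mem_insert x {y})⟩ = fx ∧
      φ ⟨y, Submodule.subset_span (Set.mem_insert_of_mem x rfl)⟩ = fy := by
  let f : R × R →ₗ[R] N :=
    (LinearMap.toSpanSingleton R N fx).coprod (LinearMap.toSpanSingleton R N fy)
  have hker : LinearMap.ker (Submodule.spanPairPresentation x y) ≤ LinearMap.ker f := by
    rintro ⟨r, s⟩ h
    simpa [f] using hrel r s (by simpa using congr_arg Subtype.val h)
  refine (existsUnique_congr fun φ => ?_).mp
    (LinearMap.existsUnique_comp_eq_of_surjective
      (Submodule.spanPairPresentation_surjective x y) hker)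
  have hx : Submodule.spanPairPresentation x y ((1 : R), (0 : R)) =
      ⟨x, Submodule.subset_span (Set.mem_insert x {y})⟩ := Subtype.ext (by simp)
  have hy : Submodule.spanPairPresentation x y ((0 : R), (1 : R)) =
      ⟨y, Submodule.subset_span (Set.mem_insert_of_mem x rfl)⟩ := Subtype.ext (by simp)
  simp [LinearMap.prod_ext_iff, LinearMap.ext_ring_iff, f, hx, hy]

end SpanPair

theorem Prime.mul_add_mul_mem_span_swap {R : Type*} [CommRing R] [IsDomain R]
    {x y A B r s : R} (hx : Prime x) (hxy : ¬ x ∣ y)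
    (h : r * x + s * y ∈ Ideal.span {A * x - B * y}) :
    r * B + s * A ∈ Ideal.span {A * x - B * y} := by
  obtain ⟨t, ht⟩ := Ideal.mem_span_singleton'.mp h
  have hdvd : x ∣ (s + t * B) * y := ⟨t * A - r, by linear_combination -ht⟩
  obtain ⟨c, hc⟩ := (hx.dvd_mul.mp hdvd).resolve_right hxy
  have hr : r = t * A - c * y := by
    refine mul_right_cancel₀ hx.ne_zero (?_ : r * x = (t * A - c * y) * x)
    linear_combination -ht - y * hc
  exact Ideal.mem_span_singleton'.mpr ⟨c, by linear_combination -B * hr - A * hc⟩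

theorem Prime.mul_add_mul_eq_zero_swap {R : Type*} [CommRing R] [IsDomain R]
    {x y A B : R} (hx : Prime x) (hxy : ¬ x ∣ y)
    {u v : R ⧸ Ideal.span {A * x - B * y}}
    (h : u * Ideal.Quotient.mk _ x + v * Ideal.Quotient.mk _ y = 0) :
    u * Ideal.Quotient.mk _ B + v * Ideal.Quotient.mk _ A = 0 := by
  obtain ⟨r, rfl⟩ := Ideal.Quotient.mk_surjective u
  obtain ⟨s, rfl⟩ := Ideal.Quotient.mk_surjective v
  simp only [← map_mul, ← map_add, Ideal.Quotient.eq_zero_iff_mem] at h ⊢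
  exact hx.mul_add_mul_mem_span_swap hxy h

/-- Let `R = k[x,y,z,w]/(Ax - By)` and `J = (x,y) ⊆ R`. There is a unique `R`-module
homomorphism `φ : J → R` with `φ(x) = B` and `φ(y) = A`. -/
theorem exists_unique_unprojection_hom (k : Type*) [Field k]
    (A B : MvPolynomial (Fin 4) k)
    (Q : Ideal (MvPolynomial (Fin 4) k))
    (hQ : Q = Ideal.span {A * X 0 - B * X 1})
    (J : Ideal (MvPolynomial (Fin 4) k ⧸ Q))
    (hJ : J = Ideal.span {Ideal.Quotient.mk Q (X 0), Ideal.Quotient.mk Q (X 1)}) :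
    ∃! φ : J →ₗ[MvPolynomial (Fin 4) k ⧸ Q] (MvPolynomial (Fin 4) k ⧸ Q),
      φ ⟨Ideal.Quotient.mk Q (X 0), by
          rw [hJ]; exact Ideal.subset_span (Set.mem_insert _ _)⟩
        = Ideal.Quotient.mk Q B ∧
      φ ⟨Ideal.Quotient.mk Q (X 1), by
          rw [hJ]; exact Ideal.subset_span (Set.mem_insert_of_mem _ rfl)⟩
        = Ideal.Quotient.mk Q A := by
  subst hQ hJ
  refine existsUnique_linearMap_span_pair _ _ _ _ fun u v h => ?_
  exact X_prime.mul_add_mul_eq_zero_swap (by simp) h
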